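/- Let N ≥ 1 and let J_0, J_1, ..., J_N be real numbers. Define the N×N tridiagonal matrix A by A_{ii} = J_{i-1} + J_i, A_{i,i+1} = A_{i+1,i} = -J_i, and A_{ij} = 0 for |i-j| > 1. Then det(A) = Σ_{k=0}^{N} Π_{i=0, i≠k}^{N} J_i. -/

import Mathlib

/-!
The matrix is the Laplacian of the path `0 — 1 — ⋯ — N+1` with edge weights `J₀, …, J_N`,
restricted to the interior vertices. Only the corner entry `A₀₀ = J₀ + J₁` involves `J₀`, so
expanding along the first row makes the determinant affine in `J₀`:
`det A(J) = J₀ · det A(J₁, …, J_N) + det A(0, J₁, …, J_N)`. When `J₀ = 0`, adding the first column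
to the second leaves `J₁` as the only nonzero entry of the first row, and the remaining minor is
`A(0, J₂, …, J_N)`; hence `det A(0, J₁, …, J_N) = J₁ ⋯ J_N`. The sum `∑ₖ ∏_{i ≠ k} Jᵢ` satisfies
the same recursion in `J₀`.
-/

open Finset Matrix

variable {R : Type*} [CommRing R]

theorem Matrix.det_add_single_zero_zero {n : ℕ} (A : Matrix (Fin (n + 1)) (Fin (n + 1)) R)
    (c : R) : (A + single 0 0 c).det = A.det + c * (A.submatrix Fin.succ Fin.succ).det := by
  have hminor (f : Fin n → Fin (n + 1)) :
      (A + single 0 0 c).submatrix Fin.succ f = A.submatrix Fin.succ f := by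
    ext k l
    simp [(Fin.succ_ne_zero _).symm]
  rw [det_succ_row_zero, det_succ_row_zero A, Fin.sum_univ_succ, Fin.sum_univ_succ]
  simp [hminor, (Fin.succ_ne_zero _).symm]
  ring

theorem Matrix.det_eq_mul_det_submatrix_succ_of_row_zero {n : ℕ}
    (A : Matrix (Fin (n + 1)) (Fin (n + 1)) R) (hA : ∀ j, j ≠ 0 → A 0 j = 0) :
    A.det = A 0 0 * (A.submatrix Fin.succ Fin.succ).det := by
  rw [det_succ_row_zero, Fin.sum_univ_succ]
  simp [hA _ (Fin.succ_ne_zero _)]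

theorem Fin.prod_univ_erase {M : Type*} [CommMonoid M] {n : ℕ} (f : Fin (n + 1) → M)
    (k : Fin (n + 1)) : ∏ i ∈ univ.erase k, f i = ∏ i, f (k.succAbove i) := by
  rw [Fin.univ_succAbove n k, erase_cons, prod_map, Fin.coe_succAboveEmb]

theorem Fin.sum_prod_univ_erase_succ {M : Type*} [CommSemiring M] {n : ℕ} (f : Fin (n + 2) → M) :
    ∑ k, ∏ i ∈ univ.erase k, f i =
      ∏ i : Fin (n + 1), f i.succ + f 0 * ∑ k, ∏ i ∈ univ.erase k, Fin.tail f i := by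
  simp only [Fin.prod_univ_erase, Fin.sum_univ_succ (n := n + 1), Fin.succAbove_zero, mul_sum,
    Fin.prod_univ_succ (n := n), Fin.succ_succAbove_zero, Fin.succ_succAbove_succ, Fin.tail]

def groundedPathLaplacian {n : ℕ} (J : Fin (n + 1) → R) : Matrix (Fin n) (Fin n) R :=
  Matrix.of fun k l =>
    if k = l then J k.castSucc + J k.succ
    else if (l : ℕ) = k + 1 then -J k.succ
    else if (k : ℕ) = l + 1 then -J l.succ
    else 0

theorem groundedPathLaplacian_submatrix_succ {n : ℕ} (J : Fin (n + 2) → R) :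
    (groundedPathLaplacian J).submatrix Fin.succ Fin.succ = groundedPathLaplacian (Fin.tail J) := by
  ext k l
  simp [groundedPathLaplacian, Fin.tail]

theorem groundedPathLaplacian_eq_add_single {n : ℕ} (J : Fin (n + 2) → R) :
    groundedPathLaplacian J =
      groundedPathLaplacian (Function.update J 0 0) + single 0 0 (J 0) := by
  ext ⟨_ | k, _⟩ ⟨_ | l, _⟩ <;> simp [groundedPathLaplacian, Function.update_apply]
  ring

theorem det_groundedPathLaplacian_of_eq_zero : ∀ {n : ℕ} (J : Fin (n + 1) → R), J 0 = 0 →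
    (groundedPathLaplacian J).det = ∏ i : Fin n, J i.succ
  | 0, _, _ => by simp
  | 1, J, hJ => by simp [groundedPathLaplacian, hJ]
  | n + 2, J, hJ => by
    set M := groundedPathLaplacian J
    set B := M.updateCol 1 fun k => M k 1 + M k 0
    have hB_row (j : Fin (n + 2)) : B 0 j = if j = 0 then J 1 else 0 := by
      rcases j with ⟨_ | _ | j, _⟩ <;> simp [B, M, groundedPathLaplacian, hJ]
    have hB_minor : B.submatrix Fin.succ Fin.succ =
        groundedPathLaplacian (Function.update (Fin.tail J) 0 0) := by
      ext ⟨_ | _ | k, _⟩ ⟨_ | _ | l, _⟩ <;>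
        simp [B, M, groundedPathLaplacian, Fin.tail, Function.update_apply]
      rfl -- `J ⟨2, _⟩ = J 2`, which `simp` does not normalize
    rw [← det_updateCol_add_self M Fin.zero_lt_one.ne',
      det_eq_mul_det_submatrix_succ_of_row_zero B fun j hj => by simp [hB_row, hj], hB_minor,
      det_groundedPathLaplacian_of_eq_zero _ (by simp), hB_row, Fin.prod_univ_succ (n := n + 1)]
    simp [Fin.tail]

theorem det_groundedPathLaplacian_succ {n : ℕ} (J : Fin (n + 2) → R) :
    (groundedPathLaplacian J).det =
      J 0 * (groundedPathLaplacian (Fin.tail J)).det + ∏ i : Fin (n + 1), J i.succ := by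
  rw [groundedPathLaplacian_eq_add_single, det_add_single_zero_zero,
    groundedPathLaplacian_submatrix_succ, det_groundedPathLaplacian_of_eq_zero _ (by simp)]
  simp only [Fin.tail_update_zero, Function.update_of_ne (Fin.succ_ne_zero _)]
  ring

theorem det_groundedPathLaplacian {n : ℕ} (J : Fin (n + 1) → R) :
    (groundedPathLaplacian J).det = ∑ k, ∏ i ∈ univ.erase k, J i := by
  induction n with
  | zero => simp
  | succ n ih => rw [det_groundedPathLaplacian_succ, ih, Fin.sum_prod_univ_erase_succ, add_comm]

theorem tridiag_det_general (N : ℕ) (J : Fin (N + 1) → ℝ)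
    (A : Matrix (Fin N) (Fin N) ℝ)
    (hA : ∀ k l : Fin N,
      A k l = if k = l then J k.castSucc + J k.succ
        else if (l : ℕ) = (k : ℕ) + 1 then -J k.succ
        else if (k : ℕ) = (l : ℕ) + 1 then -J l.succ
        else 0) :
    A.det = ∑ k : Fin (N + 1), ∏ i ∈ Finset.univ.erase k, J i := by
  rw [show A = groundedPathLaplacian J from Matrix.ext hA, det_groundedPathLaplacian]

/-- Determinant of the symmetric tridiagonal matrix built from `J_0,…,J_N`:
`det A = ∑_{k=0}^N ∏_{i≠k} J_i`. -/
theorem tridiag_det (N : ℕ) (hN : 1 ≤ N) (J : Fin (N + 1) → ℝ)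
    (A : Matrix (Fin N) (Fin N) ℝ)
    (hA : ∀ k l : Fin N,
      A k l = if k = l then J k.castSucc + J k.succ
        else if (l : ℕ) = (k : ℕ) + 1 then -J k.succ
        else if (k : ℕ) = (l : ℕ) + 1 then -J l.succ
        else 0) :
    A.det = ∑ k : Fin (N + 1), ∏ i ∈ Finset.univ.erase k, J i :=
  tridiag_det_general N J A hA
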